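/- Domain propagation preserves the feasible set: if F denotes the set of points satisfying all affine constraints l ≤ D u ≤ u_b and the initial box bounds, then after any number of iterations of the bound strengthening updates, F ⊆ Π_i [lo_i^{(t)}, hi_i^{(t)}]; i.e., no feasible point is ever cut off by the strengthened box. -/

import Mathlib

open Finset

/-- Propagated upper value `ū_{b,i}` for row `r` of `l ≤ D u ≤ ub`. -/
noncomputable def ubarDP {m n : ℕ} (D : Matrix (Fin m) (Fin n) ℝ)
    (ub : Fin m → ℝ) (r : Fin m) (i : Fin n) (lo hi : Fin n → ℝ) : ℝ :=
  ub r - ∑ j ∈ univ.filter (fun j => j ≠ i ∧ 0 < D r j), D r j * lo j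
       - ∑ j ∈ univ.filter (fun j => j ≠ i ∧ D r j < 0), D r j * hi j

/-- Propagated lower value `l̄_{b,i}` for row `r` of `l ≤ D u ≤ ub`. -/
noncomputable def lbarDP {m n : ℕ} (D : Matrix (Fin m) (Fin n) ℝ)
    (l : Fin m → ℝ) (r : Fin m) (i : Fin n) (lo hi : Fin n → ℝ) : ℝ :=
  l r - ∑ j ∈ univ.filter (fun j => j ≠ i ∧ 0 < D r j), D r j * hi j
      - ∑ j ∈ univ.filter (fun j => j ≠ i ∧ D r j < 0), D r j * lo j

/-- One step of the domain propagation algorithm: a row `r` and a variable `i`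
with `D r i ≠ 0` are chosen and the bounds of `u_i` are strengthened using the
propagated values computed from the current box. -/
noncomputable def dpStep {m n : ℕ} (D : Matrix (Fin m) (Fin n) ℝ)
    (l ub : Fin m → ℝ) (lo hi lo' hi' : Fin n → ℝ) : Prop :=
  ∃ r i, D r i ≠ 0 ∧
    if 0 < D r i then
      lo' = Function.update lo i (max (lo i) (lbarDP D l r i lo hi / D r i)) ∧
      hi' = Function.update hi i (min (hi i) (ubarDP D ub r i lo hi / D r i))
    else
      lo' = Function.update lo i (max (lo i) (ubarDP D ub r i lo hi / D r i)) ∧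
      hi' = Function.update hi i (min (hi i) (lbarDP D l r i lo hi / D r i))

/-!
Each propagated value only uses the constraint row `r` and the current box: for a feasible
point `x` in the box, the terms `D r j * x j` with `j ≠ i` are bounded below by
`D r j * lo j` or `D r j * hi j` according to the sign of `D r j`, and above by the other one.
Hence `lbarDP ≤ D r i * x i ≤ ubarDP`, and dividing by `D r i` (flipping the inequalities when
it is negative) shows that the strengthened bounds still hold at `x`.
-/

section RowBounds

variable {ι : Type*} [Fintype ι] [DecidableEq ι]

lemma sum_erase_eq_sum_filter_pos_add_sum_filter_neg (c x : ι → ℝ) (i : ι) :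
    ∑ j ∈ univ.erase i, c j * x j =
      ∑ j ∈ univ.filter (fun j => j ≠ i ∧ 0 < c j), c j * x j
        + ∑ j ∈ univ.filter (fun j => j ≠ i ∧ c j < 0), c j * x j := by
  rw [sum_filter, sum_filter, ← sum_add_distrib, ← filter_ne', sum_filter]
  refine sum_congr rfl fun j _ => ?_
  rcases lt_trichotomy (c j) 0 with hneg | hzero | hpos
  · simp [hneg, hneg.not_gt]
  · simp [hzero]
  · simp [hpos, hpos.not_gt]

variable {c lo hi x : ι → ℝ}

lemma sum_filter_pos_add_sum_filter_neg_le (hbox : ∀ k, lo k ≤ x k ∧ x k ≤ hi k) (i : ι) :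
    ∑ j ∈ univ.filter (fun j => j ≠ i ∧ 0 < c j), c j * lo j
        + ∑ j ∈ univ.filter (fun j => j ≠ i ∧ c j < 0), c j * hi j
      ≤ ∑ j ∈ univ.erase i, c j * x j := by
  rw [sum_erase_eq_sum_filter_pos_add_sum_filter_neg]
  refine add_le_add ?_ ?_
  · exact sum_le_sum fun j hj => mul_le_mul_of_nonneg_left (hbox j).1 (mem_filter.1 hj).2.2.le
  · exact sum_le_sum fun j hj => mul_le_mul_of_nonpos_left (hbox j).2 (mem_filter.1 hj).2.2.le

lemma le_sum_filter_pos_add_sum_filter_neg (hbox : ∀ k, lo k ≤ x k ∧ x k ≤ hi k) (i : ι) :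
    ∑ j ∈ univ.erase i, c j * x j
      ≤ ∑ j ∈ univ.filter (fun j => j ≠ i ∧ 0 < c j), c j * hi j
        + ∑ j ∈ univ.filter (fun j => j ≠ i ∧ c j < 0), c j * lo j := by
  rw [sum_erase_eq_sum_filter_pos_add_sum_filter_neg]
  refine add_le_add ?_ ?_
  · exact sum_le_sum fun j hj => mul_le_mul_of_nonneg_left (hbox j).2 (mem_filter.1 hj).2.2.le
  · exact sum_le_sum fun j hj => mul_le_mul_of_nonpos_left (hbox j).1 (mem_filter.1 hj).2.2.le

end RowBounds

section Propagation

variable {m n : ℕ} {D : Matrix (Fin m) (Fin n) ℝ} {l ub : Fin m → ℝ} {r : Fin m}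
  {lo hi x : Fin n → ℝ}

lemma lbarDP_le_mul (hrow : l r ≤ ∑ j, D r j * x j)
    (hbox : ∀ k, lo k ≤ x k ∧ x k ≤ hi k) (i : Fin n) :
    lbarDP D l r i lo hi ≤ D r i * x i := by
  have hsplit := add_sum_erase univ (fun j => D r j * x j) (mem_univ i)
  have hbound := le_sum_filter_pos_add_sum_filter_neg (c := D r) hbox i
  rw [lbarDP]
  linarith

lemma mul_le_ubarDP (hrow : ∑ j, D r j * x j ≤ ub r)
    (hbox : ∀ k, lo k ≤ x k ∧ x k ≤ hi k) (i : Fin n) :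
    D r i * x i ≤ ubarDP D ub r i lo hi := by
  have hsplit := add_sum_erase univ (fun j => D r j * x j) (mem_univ i)
  have hbound := sum_filter_pos_add_sum_filter_neg_le (c := D r) hbox i
  rw [ubarDP]
  linarith

lemma update_max_le_and_le_update_min (hbox : ∀ k, lo k ≤ x k ∧ x k ≤ hi k) {i : Fin n}
    {a b : ℝ} (ha : a ≤ x i) (hb : x i ≤ b) (k : Fin n) :
    Function.update lo i (max (lo i) a) k ≤ x k ∧
      x k ≤ Function.update hi i (min (hi i) b) k := by
  rcases eq_or_ne k i with rfl | hk
  · simpa using ⟨⟨(hbox k).1, ha⟩, (hbox k).2, hb⟩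
  · simpa [hk] using hbox k

lemma dpStep_preserves_box {lo' hi' : Fin n → ℝ} (hstep : dpStep D l ub lo hi lo' hi')
    (hfeas : ∀ r, l r ≤ ∑ j, D r j * x j ∧ ∑ j, D r j * x j ≤ ub r)
    (hbox : ∀ k, lo k ≤ x k ∧ x k ≤ hi k) :
    ∀ k, lo' k ≤ x k ∧ x k ≤ hi' k := by
  obtain ⟨r, i, hne, hupd⟩ := hstep
  have hl := lbarDP_le_mul (hfeas r).1 hbox i
  have hu := mul_le_ubarDP (hfeas r).2 hbox i
  split_ifs at hupd with hpos
  · obtain ⟨rfl, rfl⟩ := hupd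
    exact update_max_le_and_le_update_min hbox
      ((div_le_iff₀ hpos).2 (by linarith)) ((le_div_iff₀ hpos).2 (by linarith))
  · have hneg : D r i < 0 := lt_of_le_of_ne (not_lt.1 hpos) hne
    obtain ⟨rfl, rfl⟩ := hupd
    exact update_max_le_and_le_update_min hbox
      ((div_le_iff_of_neg hneg).2 (by linarith)) ((le_div_iff_of_neg hneg).2 (by linarith))

end Propagation

/-- Domain propagation never cuts off a feasible point: every point satisfying
the affine constraints `l ≤ D u ≤ ub` and the initial box bounds lies in the
box obtained after any number of bound-strengthening iterations. -/
theorem stmt_18 (m n : ℕ) (D : Matrix (Fin m) (Fin n) ℝ) (l ub : Fin m → ℝ)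
    (lo hi : ℕ → Fin n → ℝ)
    (hstep : ∀ t, dpStep D l ub (lo t) (hi t) (lo (t + 1)) (hi (t + 1))) :
    ∀ x : Fin n → ℝ,
      (∀ r, l r ≤ ∑ j, D r j * x j ∧ ∑ j, D r j * x j ≤ ub r) →
      (∀ i, lo 0 i ≤ x i ∧ x i ≤ hi 0 i) →
      ∀ t i, lo t i ≤ x i ∧ x i ≤ hi t i := by
  intro x hfeas hbox₀ t
  induction t with
  | zero => exact hbox₀
  | succ t ih => exact dpStep_preserves_box (hstep t) hfeas ih
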